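/- arXiv:1909.03301 — 4 statements merged into one kernel-verified Lean document; each statement's English description precedes it below -/
import Mathlib

section
/- Let K be a field of characteristic zero equipped with a derivation ∂, and let C = {a ∈ K : ∂a = 0} be its subfield of constants. Let n ≥ 1 and let f_1,…,f_n, g_1,…,g_n ∈ K. Then ∑_{i=1}^n f_i ⊗ g_i = 0 in the tensor product K ⊗_C K if and only if ∑_{i=1}^n f_i · ∂^k(g_i) = 0 for every integer k ≥ 0. (This is Lemma 3.3 of the paper: the right-hand condition is the coefficientwise statement that the pseudodifferential operator ∑_i f_i ∂^{-1}∘g_i vanishes, and the left-hand condition that the two-variable function ∑_i f_i(x′)g_i(x″) vanishes.) -/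
open scoped TensorProduct

/-- The subfield of constants `C = {a ∈ K : ∂a = 0}` of a field `K` of characteristic zero
equipped with a derivation `∂`. -/
def constantSubfield {K : Type*} [Field K] [CharZero K] (d : Derivation ℚ K K) :
    Subfield K where
  carrier := {a : K | d a = 0}
  zero_mem' := map_zero d
  one_mem' := d.map_one_eq_zero
  add_mem' := by
    intro a b ha hb
    simp only [Set.mem_setOf_eq] at *
    rw [map_add, ha, hb, add_zero]
  neg_mem' := by
    intro a ha
    simp only [Set.mem_setOf_eq] at *
    rw [map_neg, ha, neg_zero]
  mul_mem' := by
    intro a b ha hb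
    simp only [Set.mem_setOf_eq] at *
    rw [Derivation.leibniz, ha, hb, smul_zero, smul_zero, add_zero]
  inv_mem' := by
    intro a ha
    simp only [Set.mem_setOf_eq] at *
    rcases eq_or_ne a 0 with h | h
    · simp [h]
    · have h1 : d (a * a⁻¹) = 0 := by
        rw [mul_inv_cancel₀ h, Derivation.map_one_eq_zero]
      rw [Derivation.leibniz, ha, smul_zero, add_zero, smul_eq_mul] at h1
      exact (mul_eq_zero.mp h1).resolve_left h

section Aux

variable {K : Type*} [Field K] [CharZero K] (d : Derivation ℚ K K)

lemma mem_constantSubfield' {a : K} : a ∈ constantSubfield d ↔ d a = 0 := Iff.rfl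

lemma iter_sum {ι : Type*} (k : ℕ) (s : Finset ι) (h : ι → K) :
    (⇑d)^[k] (∑ i ∈ s, h i) = ∑ i ∈ s, (⇑d)^[k] (h i) := by
  induction k with
  | zero => rfl
  | succ k ih =>
      rw [Function.iterate_succ_apply', ih, map_sum]
      exact Finset.sum_congr rfl fun i _ => (Function.iterate_succ_apply' (⇑d) k (h i)).symm

lemma iter_add (k : ℕ) (x y : K) : (⇑d)^[k] (x + y) = (⇑d)^[k] x + (⇑d)^[k] y := by
  induction k generalizing x y with
  | zero => rfl
  | succ k ih =>
      rw [Function.iterate_succ_apply', Function.iterate_succ_apply',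
        Function.iterate_succ_apply', ih, map_add]

lemma iter_const_mul {c : K} (hc : d c = 0) (k : ℕ) (x : K) :
    (⇑d)^[k] (c * x) = c * (⇑d)^[k] x := by
  induction k generalizing x with
  | zero => rfl
  | succ k ih =>
      rw [Function.iterate_succ_apply, Function.iterate_succ_apply]
      rw [d.leibniz, hc, smul_zero, add_zero, smul_eq_mul, ih]

/-- Wronskian-style lemma: if the `g i`, `i ∈ s`, admit no nontrivial relation with
constant coefficients, and `∑ f i * ∂^k (g i) = 0` for all `k`, then `f i = 0` on `s`. -/
lemma wronskian_aux {ι : Type*} [DecidableEq ι] (g : ι → K) : ∀ s : Finset ι,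
    (∀ c : ι → K, (∀ i ∈ s, d (c i) = 0) → ∑ i ∈ s, c i * g i = 0 →
      ∀ i ∈ s, c i = 0) →
    ∀ f : ι → K, (∀ k : ℕ, ∑ i ∈ s, f i * (⇑d)^[k] (g i) = 0) →
    ∀ i ∈ s, f i = 0 := by
  intro s
  induction s using Finset.strongInduction with
  | _ s IH =>
    intro hindep f hf
    by_contra hcon
    push_neg at hcon
    obtain ⟨i₀, hi₀, hfi₀⟩ := hcon
    set a : ι → K := fun i => f i / f i₀ with ha_def
    have ha : ∀ k : ℕ, ∑ i ∈ s, a i * (⇑d)^[k] (g i) = 0 := by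
      intro k
      have h : ∑ i ∈ s, a i * (⇑d)^[k] (g i)
          = (∑ i ∈ s, f i * (⇑d)^[k] (g i)) / f i₀ := by
        rw [Finset.sum_div]
        refine Finset.sum_congr rfl fun i _ => ?_
        simp only [ha_def]
        field_simp
      rw [h, hf k, zero_div]
    have hda : ∀ k : ℕ, ∑ i ∈ s, d (a i) * (⇑d)^[k] (g i) = 0 := by
      intro k
      have h1 : d (∑ i ∈ s, a i * (⇑d)^[k] (g i)) = 0 := by rw [ha k, map_zero]
      rw [map_sum] at h1
      have h2 : ∑ i ∈ s, (a i * (⇑d)^[k+1] (g i) + (⇑d)^[k] (g i) * d (a i)) = 0 := by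
        rw [← h1]
        refine Finset.sum_congr rfl fun i _ => ?_
        rw [d.leibniz, smul_eq_mul, smul_eq_mul, Function.iterate_succ_apply']
      rw [Finset.sum_add_distrib, ha (k+1), zero_add] at h2
      rw [← h2]
      exact Finset.sum_congr rfl fun i _ => mul_comm _ _
    have hai₀ : d (a i₀) = 0 := by
      simp [ha_def, div_self hfi₀]
    have herase : ∀ k : ℕ, ∑ i ∈ s.erase i₀, d (a i) * (⇑d)^[k] (g i) = 0 := by
      intro k
      have h := hda k
      rwa [← Finset.add_sum_erase s _ hi₀, hai₀, zero_mul, zero_add] at h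
    have hindep' : ∀ c : ι → K, (∀ i ∈ s.erase i₀, d (c i) = 0) →
        ∑ i ∈ s.erase i₀, c i * g i = 0 → ∀ i ∈ s.erase i₀, c i = 0 := by
      intro c hc hsum i hi
      set c' : ι → K := fun j => if j = i₀ then 0 else c j with hc'_def
      have h1 : ∀ j ∈ s, d (c' j) = 0 := by
        intro j hj
        by_cases hji : j = i₀
        · simp [hc'_def, hji]
        · simpa [hc'_def, hji] using hc j (Finset.mem_erase.mpr ⟨hji, hj⟩)
      have h2 : ∑ j ∈ s, c' j * g j = 0 := by
        rw [← Finset.add_sum_erase s _ hi₀]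
        simp only [hc'_def, if_pos rfl, zero_mul, zero_add]
        rw [← hsum]
        refine Finset.sum_congr rfl fun j hj => ?_
        rw [if_neg (Finset.mem_erase.mp hj).1]
      have h3 := hindep c' h1 h2 i (Finset.mem_of_mem_erase hi)
      simpa [hc'_def, (Finset.mem_erase.mp hi).1] using h3
    have hall : ∀ i ∈ s.erase i₀, d (a i) = 0 :=
      IH (s.erase i₀) (Finset.erase_ssubset hi₀) hindep' (fun i => d (a i)) herase
    have haconst : ∀ i ∈ s, d (a i) = 0 := by
      intro i hi
      by_cases hii : i = i₀
      · rw [hii]; exact hai₀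
      · exact hall i (Finset.mem_erase.mpr ⟨hii, hi⟩)
    have h0 : ∑ i ∈ s, a i * g i = 0 := by simpa using ha 0
    have hfin := hindep a haconst h0 i₀ hi₀
    rw [ha_def] at hfin
    simp only [div_self hfi₀] at hfin
    exact one_ne_zero hfin

end Aux

set_option synthInstance.maxHeartbeats 1000000 in
set_option maxHeartbeats 1000000 in
/-- Backward direction over an arbitrary finite set. -/
lemma tensor_sum_eq_zero {K : Type*} [Field K] [CharZero K] (d : Derivation ℚ K K)
    {ι : Type*} [DecidableEq ι] (g : ι → K) (s : Finset ι) :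
    ∀ f : ι → K, (∀ k : ℕ, ∑ i ∈ s, f i * (⇑d)^[k] (g i) = 0) →
      (∑ i ∈ s, f i ⊗ₜ[constantSubfield d] g i : K ⊗[constantSubfield d] K) = 0 := by
  induction s using Finset.strongInduction with
  | _ s IH =>
    intro f hf
    by_cases hP : ∀ c : ι → K, (∀ i ∈ s, d (c i) = 0) → ∑ i ∈ s, c i * g i = 0 →
        ∀ i ∈ s, c i = 0
    · have hz := wronskian_aux d g s hP f hf
      refine Finset.sum_eq_zero fun i hi => ?_
      rw [hz i hi, TensorProduct.zero_tmul]
    · push_neg at hP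
      obtain ⟨c, hc, hsum, i₀, hi₀, hci₀⟩ := hP
      set f' : ι → K := fun i => f i + (-(c i / c i₀)) * f i₀ with hf'_def
      have hf' : ∀ k : ℕ, ∑ i ∈ s.erase i₀, f' i * (⇑d)^[k] (g i) = 0 := by
        intro k
        have hD : ∑ i ∈ s, c i * (⇑d)^[k] (g i) = 0 := by
          have h : ∑ i ∈ s, c i * (⇑d)^[k] (g i) = (⇑d)^[k] (∑ i ∈ s, c i * g i) := by
            rw [iter_sum]
            exact Finset.sum_congr rfl fun i hi => (iter_const_mul d (hc i hi) k (g i)).symm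
          rw [h, hsum]
          simp [Function.iterate_fixed (map_zero d)]
        have h1 : ∑ i ∈ s.erase i₀, f i * (⇑d)^[k] (g i) = -(f i₀ * (⇑d)^[k] (g i₀)) := by
          have h := hf k
          rw [← Finset.add_sum_erase s _ hi₀] at h
          linear_combination h
        have h2 : ∑ i ∈ s.erase i₀, c i * (⇑d)^[k] (g i) = -(c i₀ * (⇑d)^[k] (g i₀)) := by
          rw [← Finset.add_sum_erase s _ hi₀] at hD
          linear_combination hD
        have h3 : ∑ i ∈ s.erase i₀, f' i * (⇑d)^[k] (g i)
            = ∑ i ∈ s.erase i₀, f i * (⇑d)^[k] (g i)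
              + (-(f i₀ / c i₀)) * ∑ i ∈ s.erase i₀, c i * (⇑d)^[k] (g i) := by
          rw [Finset.mul_sum, ← Finset.sum_add_distrib]
          refine Finset.sum_congr rfl fun i _ => ?_
          simp only [hf'_def]
          field_simp
        rw [h3, h1, h2]
        field_simp
        ring
      have hg₀ : ∑ i ∈ s.erase i₀, (-(c i / c i₀)) * g i = g i₀ := by
        have h2 : ∑ i ∈ s.erase i₀, c i * g i = -(c i₀ * g i₀) := by
          rw [← Finset.add_sum_erase s _ hi₀] at hsum
          linear_combination hsum
        have h3 : ∑ i ∈ s.erase i₀, (-(c i / c i₀)) * g i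
            = (-(1 / c i₀)) * ∑ i ∈ s.erase i₀, c i * g i := by
          rw [Finset.mul_sum]
          refine Finset.sum_congr rfl fun i _ => ?_
          field_simp
        rw [h3, h2]
        field_simp
      have hmem : ∀ i ∈ s.erase i₀, (-(c i / c i₀)) ∈ constantSubfield d := by
        intro i hi
        exact Subfield.neg_mem _ (Subfield.div_mem _
          ((mem_constantSubfield' d).mpr (hc i (Finset.mem_of_mem_erase hi)))
          ((mem_constantSubfield' d).mpr (hc i₀ hi₀)))
      have ht : (f i₀ ⊗ₜ[constantSubfield d] g i₀ : K ⊗[constantSubfield d] K)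
          = ∑ i ∈ s.erase i₀, ((-(c i / c i₀)) * f i₀) ⊗ₜ[constantSubfield d] g i := by
        conv_lhs => rw [← hg₀]
        rw [TensorProduct.tmul_sum]
        refine Finset.sum_congr rfl fun i hi => ?_
        exact (TensorProduct.smul_tmul (⟨-(c i / c i₀), hmem i hi⟩ : constantSubfield d)
          (f i₀) (g i)).symm
      have key : (∑ i ∈ s, f i ⊗ₜ[constantSubfield d] g i : K ⊗[constantSubfield d] K)
          = ∑ i ∈ s.erase i₀, f' i ⊗ₜ[constantSubfield d] g i := by
        rw [← Finset.add_sum_erase s _ hi₀, ht, ← Finset.sum_add_distrib]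
        refine Finset.sum_congr rfl fun i _ => ?_
        rw [← TensorProduct.add_tmul]
        congr 1
        simp only [hf'_def]
        ring
      rw [key]
      exact IH (s.erase i₀) (Finset.erase_ssubset hi₀) f' hf'

set_option synthInstance.maxHeartbeats 1000000 in
set_option maxHeartbeats 1000000 in
/-- The `C`-linear map `K ⊗_C K → K` sending `f ⊗ g` to `f * ∂^k g`. -/
noncomputable def pairingMap {K : Type*} [Field K] [CharZero K] (d : Derivation ℚ K K)
    (k : ℕ) : (K ⊗[constantSubfield d] K) →ₗ[constantSubfield d] K :=
  TensorProduct.lift (LinearMap.mk₂ (constantSubfield d)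
    (fun x y => x * (⇑d)^[k] y)
    (fun x x' y => add_mul x x' _)
    (fun c x y => by
      show ((c : K) * x) * (⇑d)^[k] y = (c : K) * (x * (⇑d)^[k] y)
      ring)
    (fun x y y' => by
      show x * (⇑d)^[k] (y + y') = x * (⇑d)^[k] y + x * (⇑d)^[k] y'
      rw [iter_add, mul_add])
    (fun c x y => by
      show x * (⇑d)^[k] ((c : K) * y) = (c : K) * (x * (⇑d)^[k] y)
      rw [iter_const_mul d c.2]
      ring))

set_option synthInstance.maxHeartbeats 1000000 in
set_option maxHeartbeats 1000000 in
/-- Lemma 3.3: `∑ fᵢ ⊗ gᵢ = 0` in `K ⊗_C K` iff `∑ fᵢ · ∂^k(gᵢ) = 0` for all `k ≥ 0`. -/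
theorem sum_tmul_eq_zero_iff_forall_iterated_deriv
    {K : Type*} [Field K] [CharZero K] (d : Derivation ℚ K K)
    {n : ℕ} (hn : 1 ≤ n) (f g : Fin n → K) :
    (∑ i, f i ⊗ₜ[constantSubfield d] g i : K ⊗[constantSubfield d] K) = 0 ↔
      ∀ k : ℕ, ∑ i, f i * (⇑d)^[k] (g i) = 0 := by
  constructor
  · intro h k
    have h1 := congrArg (pairingMap d k) h
    rw [map_sum, map_zero] at h1
    rw [← h1]
    refine Finset.sum_congr rfl fun i _ => ?_
    rfl
  · intro h
    exact tensor_sum_eq_zero d g Finset.univ f h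
end

section
/- Let W be an integral domain which is a commutative ℂ-algebra, equipped with a ℂ-linear derivation ∂ : W → W, and assume that the field of constants of the fraction field Frac(W) (i.e., the elements of Frac(W) killed by the canonical extension of ∂) equals ℂ. Then the ℂ-linear map W ⊗_ℂ W → ∏_{k∈ℕ} W sending a ⊗ b to the sequence (a·∂^k(b))_{k≥0} is injective. (This is part (a) of the Lemma in Section 12.1 of the paper: elements ∑_i a_i ⊗ b_i of W ⊗ W correspond bijectively to the pseudodifferential operators ∑_i a_i ∂^{-1}∘b_i; the constants hypothesis must be imposed on the fraction field for the statement to hold.) -/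
/-!
Expand an element of `W ⊗ W` as `∑ cⱼ ⊗ bⱼ` over a `ℂ`-basis `(bⱼ)` of `W`; it lies in the kernel
exactly when `∑ cⱼ ∂ᵏ bⱼ = 0` for every `k`. Such a relation can be differentiated termwise
(using the relation at `k + 1`), so `∂c` is again a relation, and `c j • ∂c - ∂(c j) • c` is a
relation supported on fewer indices. By induction its coefficients, the Wronskians
`c j ∂(c i) - c i ∂(c j)`, vanish; since the constants of `Frac W` are `ℂ`, every `c i` is then
`γᵢ c j` with `γᵢ ∈ ℂ`, and the relation at `k = 0` reads `c j ∑ γᵢ bᵢ = 0`. Linear independence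
of the basis gives `γ = 0`, hence `c j = γⱼ c j = 0`.
-/

open scoped TensorProduct

/-- The `ℂ`-linear map `W ⊗_ℂ W → ∏_{k ∈ ℕ} W` sending `a ⊗ b` to the sequence
`(a · ∂^k(b))_{k ≥ 0}` of coefficients of the pseudodifferential operator `a ∂⁻¹ ∘ b`. -/
noncomputable def pdoPairing {W : Type*} [CommRing W] [Algebra ℂ W]
    (D : Derivation ℂ W W) : W ⊗[ℂ] W →ₗ[ℂ] (ℕ → W) :=
  TensorProduct.lift <| LinearMap.mk₂ ℂ
    (fun a b k => a * (D.toLinearMap ^ k) b)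
    (fun a a' b => by funext k; simp [add_mul])
    (fun s a b => by funext k; simp [smul_mul_assoc])
    (fun a b b' => by funext k; simp [mul_add])
    (fun s a b => by funext k; simp [mul_smul_comm])

theorem pdoPairing_tmul {W : Type*} [CommRing W] [Algebra ℂ W] (D : Derivation ℂ W W)
    (a b : W) (k : ℕ) :
    pdoPairing D (a ⊗ₜ b) k = a * (D.toLinearMap ^ k) b := rfl

section Derivation

variable {R A ι : Type*} [CommSemiring R] [CommRing A] [Algebra R A] (D : Derivation R A A)

theorem Derivation.toLinearMap_pow_succ_apply (k : ℕ) (a : A) :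
    (D.toLinearMap ^ (k + 1)) a = D ((D.toLinearMap ^ k) a) := by
  rw [pow_succ', Module.End.mul_apply, Derivation.coeFn_coe]

theorem sum_derivation_mul_pow_eq_zero {s : Finset ι} {c b : ι → A}
    (h : ∀ k : ℕ, ∑ i ∈ s, c i * (D.toLinearMap ^ k) (b i) = 0) (k : ℕ) :
    ∑ i ∈ s, D (c i) * (D.toLinearMap ^ k) (b i) = 0 := by
  have hD : D (∑ i ∈ s, c i * (D.toLinearMap ^ k) (b i)) = 0 := by rw [h k, map_zero]
  simpa only [map_sum, Derivation.leibniz, smul_eq_mul, ← D.toLinearMap_pow_succ_apply,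
    Finset.sum_add_distrib, h (k + 1), zero_add, mul_comm] using hD

end Derivation

section Wronskian

variable {W ι : Type*} [CommRing W] [IsDomain W] [Algebra ℂ W] (D : Derivation ℂ W W)

theorem eq_zero_of_forall_sum_mul_derivation_pow_eq_zero
    (hconst : ∀ a b : W, b ≠ 0 → b * D a = a * D b → ∃ c : ℂ, a = algebraMap ℂ W c * b)
    {b : ι → W} (hb : LinearIndependent ℂ b) (s : Finset ι) (c : ι → W)
    (hc : ∀ k : ℕ, ∑ i ∈ s, c i * (D.toLinearMap ^ k) (b i) = 0) : ∀ j ∈ s, c j = 0 := by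
  classical
  induction s using Finset.strongInduction generalizing c with
  | H s ih =>
    intro j hj
    by_contra hcj
    set wronskian : ι → W := fun i => c j * D (c i) - c i * D (c j)
    have hwronskian : ∀ k : ℕ, ∑ i ∈ s.erase j, wronskian i * (D.toLinearMap ^ k) (b i) = 0 := by
      intro k
      rw [Finset.sum_erase _ (by simp [wronskian])]
      calc ∑ i ∈ s, wronskian i * (D.toLinearMap ^ k) (b i)
          = c j * ∑ i ∈ s, D (c i) * (D.toLinearMap ^ k) (b i)
            - D (c j) * ∑ i ∈ s, c i * (D.toLinearMap ^ k) (b i) := by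
            simp only [Finset.mul_sum, ← Finset.sum_sub_distrib, wronskian]
            exact Finset.sum_congr rfl fun i _ => by ring
        _ = 0 := by rw [sum_derivation_mul_pow_eq_zero D hc, hc]; ring
    have hproportional : ∀ i, ∃ γ : ℂ, i ∈ s → c i = algebraMap ℂ W γ * c j := by
      intro i
      by_cases hi : i ∈ s
      · refine (hconst (c i) (c j) hcj ?_).imp fun γ hγ _ => hγ
        rcases eq_or_ne i j with rfl | hij
        · rfl
        · exact sub_eq_zero.mp <| ih _ (Finset.erase_ssubset hj) wronskian hwronskian i
            (Finset.mem_erase.mpr ⟨hij, hi⟩)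
      · exact ⟨0, fun h => absurd h hi⟩
    choose γ hγ using hproportional
    have hγb : ∑ i ∈ s, γ i • b i = 0 := by
      refine (mul_eq_zero.mp ?_).resolve_left hcj
      calc c j * ∑ i ∈ s, γ i • b i = ∑ i ∈ s, c i * (D.toLinearMap ^ 0) (b i) := by
            simp only [Finset.mul_sum, Algebra.smul_def, pow_zero, Module.End.one_apply]
            exact Finset.sum_congr rfl fun i hi => by rw [hγ i hi]; ring
        _ = 0 := hc 0
    exact hcj <| by rw [hγ j hj, linearIndependent_iff'.mp hb s γ hγb j hj, map_zero, zero_mul]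

end Wronskian

/-- Part (a) of the Lemma in Section 12.1: for an integral domain `W` which is a commutative
`ℂ`-algebra with a `ℂ`-linear derivation `∂` such that the constants of `Frac(W)` are exactly
`ℂ`, the map `W ⊗_ℂ W → ∏_{k ∈ ℕ} W`, `a ⊗ b ↦ (a · ∂^k(b))_{k ≥ 0}`, is injective.
The hypothesis that the constants of the fraction field equal `ℂ` is expressed elementwise:
`∂(a/b) = 0` (i.e. `b·∂a = a·∂b` with `b ≠ 0`) implies `a/b ∈ ℂ` (i.e. `a = c·b`). -/
theorem pdoPairing_injective {W : Type*} [CommRing W] [IsDomain W] [Algebra ℂ W]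
    (D : Derivation ℂ W W)
    (hconst : ∀ a b : W, b ≠ 0 → b * D a = a * D b →
      ∃ c : ℂ, a = algebraMap ℂ W c * b) :
    Function.Injective ⇑(pdoPairing D) := by
  classical
  let b := Module.Basis.ofVectorSpace ℂ W
  refine (injective_iff_map_eq_zero _).mpr fun x hx => ?_
  obtain ⟨m, rfl⟩ := (TensorProduct.equivFinsuppOfBasisRight (M := W) b).symm.surjective x
  have hm : ∀ k : ℕ, ∑ i ∈ m.support, m i * (D.toLinearMap ^ k) (b i) = 0 := fun k => by
    simpa [TensorProduct.equivFinsuppOfBasisRight_symm_apply, Finsupp.sum, pdoPairing_tmul]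
      using congrFun hx k
  have : m = 0 := Finsupp.ext fun i => by
    by_cases hi : i ∈ m.support
    · exact eq_zero_of_forall_sum_mul_derivation_pow_eq_zero D hconst b.linearIndependent _ m hm
        i hi
    · exact Finsupp.notMem_support_iff.mp hi
  rw [this, map_zero]
end

section
/- Let R be an associative unital algebra over ℚ, let d ∈ R be invertible with two-sided inverse d^{-1}, and let x ∈ R satisfy d·x − x·d = 1. Then for every integer n ≥ 1, (d^{-1})^n = ∑_{k=0}^{n−1} ((−1)^k / (k!·(n−1−k)!)) · x^{n−1−k} · d^{-1} · x^k. (This is the identity of pseudodifferential operators ∂^{-n} = ∑_{k=0}^{n-1} ((−1)^k/(k!(n−1−k)!)) x^{n-1-k} ∂^{-1} ∘ x^k, proved by induction in Section 12.3 of the paper, here stated in the abstract setting of a Weyl-type relation.) -/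
private lemma weyl_alt_sum (n : ℕ) (hn : 1 ≤ n) :
    ∑ k ∈ Finset.range (n + 1),
      (-1 : ℚ) ^ k / ((Nat.factorial k : ℚ) * (Nat.factorial (n - k) : ℚ)) = 0 := by
  have h := Int.alternating_sum_range_choose_of_ne (n := n) (by omega)
  have h2 : ∑ k ∈ Finset.range (n + 1), (-1 : ℚ) ^ k * (n.choose k : ℚ) = 0 := by
    exact_mod_cast congrArg (fun z : ℤ => (z : ℚ)) h
  have key : ∑ k ∈ Finset.range (n + 1),
      (-1 : ℚ) ^ k / ((Nat.factorial k : ℚ) * (Nat.factorial (n - k) : ℚ))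
      = (∑ k ∈ Finset.range (n + 1), (-1 : ℚ) ^ k * (n.choose k : ℚ)) / n.factorial := by
    rw [Finset.sum_div]
    refine Finset.sum_congr rfl fun k hk => ?_
    have hk' : k ≤ n := Nat.lt_succ_iff.mp (Finset.mem_range.mp hk)
    rw [Nat.cast_choose ℚ hk']
    have h1 : (Nat.factorial k : ℚ) ≠ 0 := Nat.cast_ne_zero.mpr (Nat.factorial_ne_zero k)
    have h3 : (Nat.factorial (n - k) : ℚ) ≠ 0 := Nat.cast_ne_zero.mpr (Nat.factorial_ne_zero _)
    have h4 : (Nat.factorial n : ℚ) ≠ 0 := Nat.cast_ne_zero.mpr (Nat.factorial_ne_zero n)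
    field_simp
  rw [key, h2, zero_div]

/-- The pseudodifferential-operator identity
`∂^{-n} = ∑_{k=0}^{n-1} ((−1)^k/(k!(n−1−k)!)) x^{n-1-k} ∂^{-1} ∘ x^k` (Section 12.3 of the
paper), stated abstractly: in an associative unital `ℚ`-algebra `R`, if `d` is invertible with
two-sided inverse `e` and `x` satisfies the Weyl relation `d·x − x·d = 1`, then for all `n ≥ 1`,
`e^n = ∑_{k=0}^{n−1} ((−1)^k/(k!·(n−1−k)!)) • (x^{n−1−k} · e · x^k)`. -/
theorem inv_pow_eq_sum_weyl {R : Type*} [Ring R] [Algebra ℚ R] (d e x : R)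
    (hde : d * e = 1) (hed : e * d = 1) (hx : d * x - x * d = 1) :
    ∀ n : ℕ, 1 ≤ n →
      e ^ n = ∑ k ∈ Finset.range n,
        ((-1 : ℚ) ^ k / ((Nat.factorial k : ℚ) * (Nat.factorial (n - 1 - k) : ℚ))) •
          (x ^ (n - 1 - k) * e * x ^ k) := by
  have hx' : d * x = x * d + 1 := sub_eq_iff_eq_add'.mp hx
  -- commutation of d with powers of x
  have hdx : ∀ m : ℕ, d * x ^ m = x ^ m * d + m • x ^ (m - 1) := by
    intro m
    induction m with
    | zero => simp
    | succ m ih =>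
      have step : d * x ^ (m + 1) = (d * x ^ m) * x := by
        rw [pow_succ, ← mul_assoc]
      rw [step, ih, add_mul, smul_mul_assoc, mul_assoc, hx', mul_add, mul_one,
        Nat.add_sub_cancel]
      have e4 : x ^ m * (x * d) = x ^ (m + 1) * d := by rw [← mul_assoc, ← pow_succ]
      rw [e4, succ_nsmul]
      rcases Nat.eq_zero_or_pos m with hm | hm
      · subst hm; simp
      · have h5 : x ^ (m - 1) * x = x ^ m := by
          rw [← pow_succ]; congr 1; omega
        rw [h5]; abel
  intro n hn
  induction n, hn using Nat.le_induction with
  | base => simp [Nat.factorial]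
  | succ n hn ih =>
    simp only [Nat.add_sub_cancel]
    set S : R := ∑ k ∈ Finset.range (n + 1),
        ((-1 : ℚ) ^ k / ((Nat.factorial k : ℚ) * (Nat.factorial (n - k) : ℚ))) •
          (x ^ (n - k) * e * x ^ k) with hS
    have hdS : d * S = e ^ n := by
      rw [hS, Finset.mul_sum]
      simp only [mul_smul_comm]
      have term : ∀ k ∈ Finset.range (n + 1),
          ((-1 : ℚ) ^ k / ((Nat.factorial k : ℚ) * (Nat.factorial (n - k) : ℚ))) •
            (d * (x ^ (n - k) * e * x ^ k))
          = ((-1 : ℚ) ^ k / ((Nat.factorial k : ℚ) * (Nat.factorial (n - k) : ℚ))) • x ^ n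
            + (((-1 : ℚ) ^ k * (n - k : ℕ) /
                ((Nat.factorial k : ℚ) * (Nat.factorial (n - k) : ℚ)))) •
              (x ^ (n - 1 - k) * e * x ^ k) := by
        intro k hk
        have hk' : k ≤ n := Nat.lt_succ_iff.mp (Finset.mem_range.mp hk)
        have hmul : d * (x ^ (n - k) * e * x ^ k)
            = x ^ n + (n - k : ℕ) • (x ^ (n - 1 - k) * e * x ^ k) := by
          have e1 : d * (x ^ (n - k) * e * x ^ k) = (d * x ^ (n - k)) * (e * x ^ k) := by
            noncomm_ring
          rw [e1, hdx (n - k), add_mul, smul_mul_assoc]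
          have e2 : x ^ (n - k) * d * (e * x ^ k) = x ^ n := by
            rw [mul_assoc, ← mul_assoc d, hde, one_mul, ← pow_add]
            congr 1; omega
          have e3 : n - k - 1 = n - 1 - k := by omega
          rw [e2, e3, ← mul_assoc]
        rw [hmul, smul_add]
        congr 1
        rw [← Nat.cast_smul_eq_nsmul ℚ, smul_smul]
        congr 1
        ring
      rw [Finset.sum_congr rfl term, Finset.sum_add_distrib, ← Finset.sum_smul,
        weyl_alt_sum n hn, zero_smul, zero_add, Finset.sum_range_succ]
      have hlast : ((-1 : ℚ) ^ n * ((n - n : ℕ) : ℚ) /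
          ((Nat.factorial n : ℚ) * (Nat.factorial (n - n) : ℚ))) •
            (x ^ (n - 1 - n) * e * x ^ n) = 0 := by
        simp
      rw [hlast, add_zero, ih]
      refine Finset.sum_congr rfl fun k hk => ?_
      have hk' : k < n := Finset.mem_range.mp hk
      congr 1
      have h1 : n - k = (n - 1 - k) + 1 := by omega
      have h2 : ((n - k : ℕ) : ℚ) = ((n - 1 - k : ℕ) : ℚ) + 1 := by
        rw [h1]; push_cast; ring
      rw [h1, Nat.factorial_succ]
      have hfk : (Nat.factorial k : ℚ) ≠ 0 := Nat.cast_ne_zero.mpr (Nat.factorial_ne_zero k)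
      have hfnk : (Nat.factorial (n - 1 - k) : ℚ) ≠ 0 :=
        Nat.cast_ne_zero.mpr (Nat.factorial_ne_zero _)
      have hnk : ((n - 1 - k : ℕ) : ℚ) + 1 ≠ 0 := by positivity
      push_cast
      field_simp
    calc e ^ (n + 1) = e * e ^ n := pow_succ' e n
    _ = e * (d * S) := by rw [hdS]
    _ = (e * d) * S := by rw [mul_assoc]
    _ = S := by rw [hed, one_mul]
end

section
/- Let W be a commutative ℂ-algebra equipped with a ℂ-linear derivation ∂ such that every w ∈ W with ∂(w) ∈ ℂ·1 lies in ℂ·1. Extend ∂ to the derivation D of the polynomial ring W[x] determined by D|_W = ∂ and D(x) = 1 (so D(∑_j p_j x^j) = ∑_j (∂(p_j) x^j + j·p_j x^{j−1})). Let b ∈ W satisfy b ∉ ℂ·1 + ∂(W). Then the images of the elements b·x^ℓ, ℓ = 0, 1, 2, …, in the quotient ℂ-vector space W[x]/D(W[x]) are linearly independent over ℂ; equivalently, if α_0,…,α_n ∈ ℂ with α_n ≠ 0 then ∑_{ℓ=0}^n α_ℓ·b·x^ℓ does not lie in D(W[x]). (This is the claim inside the proof of the Lemma in Section 12.3 of the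 paper, used to show that the elements ∫ b x^ℓ of W[x]/∂(W[x]) are linearly independent when b ∉ ℂ ⊕ ∂W.) -/
/-- The extension to `W[x]` of a derivation `∂` of `W`, determined by `D|_W = ∂` and `D(x) = 1`:
`D(∑_j p_j x^j) = ∑_j (∂(p_j) x^j + j·p_j x^{j−1})`. -/
noncomputable def extDer {W : Type*} [CommRing W] [Algebra ℂ W]
    (d : Derivation ℂ W W) : Polynomial W → Polynomial W :=
  fun q => (q.sum fun j a => Polynomial.C (d a) * Polynomial.X ^ j) + Polynomial.derivative q

lemma extDer_coeff {W : Type*} [CommRing W] [Algebra ℂ W] (d : Derivation ℂ W W)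
    (q : Polynomial W) (k : ℕ) :
    (extDer d q).coeff k = d (q.coeff k) + q.coeff (k+1) * (k+1) := by
  simp only [extDer, Polynomial.coeff_add, Polynomial.coeff_derivative]
  congr 1
  rw [Polynomial.sum_def, Polynomial.finset_sum_coeff]
  simp only [Polynomial.coeff_C_mul, Polynomial.coeff_X_pow, mul_ite, mul_one, mul_zero]
  rw [Finset.sum_ite_eq q.support k (fun j => d (q.coeff j))]
  by_cases h : k ∈ q.support
  · simp [h]
  · simp [h, Polynomial.notMem_support_iff.mp h]

/-- Claim inside the proof of the Lemma in Section 12.3: if every `w ∈ W` with `∂w ∈ ℂ·1` lies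
in `ℂ·1`, and `b ∉ ℂ·1 + ∂(W)`, then the images of `b·xˡ` in `W[x]/D(W[x])` are linearly
independent over `ℂ`: if `α_n ≠ 0` then `∑_{ℓ=0}^n α_ℓ·b·xˡ` is not of the form `D(q)`. -/
theorem not_mem_extDer_range {W : Type*} [CommRing W] [Algebra ℂ W]
    (d : Derivation ℂ W W)
    (hW : ∀ w : W, (∃ c : ℂ, d w = algebraMap ℂ W c) → ∃ c : ℂ, w = algebraMap ℂ W c)
    (b : W) (hb : ¬ ∃ (c : ℂ) (w : W), b = algebraMap ℂ W c + d w) :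
    ∀ (n : ℕ) (α : ℕ → ℂ), α n ≠ 0 →
      ¬ ∃ q : Polynomial W,
        extDer d q = ∑ ℓ ∈ Finset.range (n + 1),
          α ℓ • (Polynomial.C b * Polynomial.X ^ ℓ) := by
  rintro n α hα ⟨q, hq⟩
  have coeffEq : ∀ k, d (q.coeff k) + q.coeff (k+1) * (k+1)
      = if k < n+1 then α k • b else 0 := by
    intro k
    rw [← extDer_coeff d q k, hq, Polynomial.finset_sum_coeff]
    simp only [Polynomial.coeff_smul, Polynomial.coeff_C_mul, Polynomial.coeff_X_pow,
      mul_ite, mul_one, mul_zero, smul_ite, smul_zero]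
    rw [Finset.sum_ite_eq (Finset.range (n+1)) k (fun ℓ => α ℓ • b)]
    simp [Finset.mem_range]
  have algnat : ∀ m : ℕ, algebraMap ℂ W ((m : ℂ) + 1) = ((m : W) + 1) := by
    intro m; rw [map_add, map_one, map_natCast]
  -- all coefficients above n are constants
  have key : ∀ M j, n < j → q.natDegree + 1 ≤ j + M → ∃ c, q.coeff j = algebraMap ℂ W c := by
    intro M
    induction M with
    | zero =>
      intro j hj hdeg
      exact ⟨0, by rw [Polynomial.coeff_eq_zero_of_natDegree_lt (by omega : q.natDegree < j),
        map_zero]⟩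
    | succ M ih =>
      intro j hj hdeg
      by_cases hdeg' : q.natDegree + 1 ≤ j
      · exact ⟨0, by rw [Polynomial.coeff_eq_zero_of_natDegree_lt (by omega : q.natDegree < j),
          map_zero]⟩
      obtain ⟨c, hc⟩ := ih (j+1) (by omega) (by omega)
      have h := coeffEq j
      rw [if_neg (by omega), hc] at h
      refine hW _ ⟨-(c * ((j : ℂ)+1)), ?_⟩
      rw [map_neg, map_mul, algnat]
      linear_combination h
  obtain ⟨c, hc⟩ := key (q.natDegree + 1) (n+1) (by omega) (by omega)
  have h := coeffEq n
  rw [if_pos (by omega), hc] at h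
  apply hb
  refine ⟨(α n)⁻¹ * (c * ((n : ℂ)+1)), (α n)⁻¹ • q.coeff n, ?_⟩
  have hb' : α n • b = d (q.coeff n) + algebraMap ℂ W (c * ((n : ℂ)+1)) := by
    rw [map_mul, algnat]; exact h.symm
  have hbb : b = (α n)⁻¹ • (α n • b) := by rw [smul_smul, inv_mul_cancel₀ hα, one_smul]
  rw [hbb, hb', smul_add, Derivation.map_smul,
    Algebra.smul_def (α n)⁻¹ (algebraMap ℂ W (c * ((n : ℂ)+1))), ← map_mul, add_comm]
end
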